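/- Let f, f₁, f₂, … be holomorphic self-maps of the open unit disc 𝔻, let K ⊆ 𝔻 be a set with f(K) ⊆ K and fₙ(K) ⊆ K for all n, and suppose there is a constant 0 < k < 1 with ρ(f(z), f(w)) ≤ k·ρ(z,w) for all z, w ∈ K. Then for every z ∈ K and every positive integer n, the left compositions Fₙ = fₙ ∘ fₙ₋₁ ∘ ⋯ ∘ f₁ satisfy ρ(Fₙ(z), fⁿ(z)) ≤ Σ_{j=1}^{n} k^{n−j} · sup_{w∈K} ρ(f_j(w), f(w)). -/

import Mathlib

open Complex Set Filter Metric

/-- The open unit disc in the complex plane. -/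
def unitDisc : Set ℂ := {z : ℂ | ‖z‖ < 1}

/-- Inverse hyperbolic tangent. -/
noncomputable def artanh (x : ℝ) : ℝ := (1 / 2) * Real.log ((1 + x) / (1 - x))

/-- The hyperbolic distance on the unit disc, induced by the Riemannian metric
`2|dz|/(1-|z|²)`. -/
noncomputable def hdist (z w : ℂ) : ℝ :=
  2 * artanh ‖(z - w) / (1 - (starRingEnd ℂ) w * z)‖

/-- Left compositions: `leftComp f n = f (n-1) ∘ ⋯ ∘ f 1 ∘ f 0`, so that `f k`
plays the role of the `(k+1)`-st map `f_{k+1}` of the sequence. -/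
def leftComp (f : ℕ → ℂ → ℂ) : ℕ → ℂ → ℂ
  | 0 => id
  | n + 1 => f n ∘ leftComp f n

/-- Right compositions: `rightComp g n = g 0 ∘ g 1 ∘ ⋯ ∘ g (n-1)`, so that `g k`
plays the role of the `(k+1)`-st map `g_{k+1}` of the sequence. -/
def rightComp (g : ℕ → ℂ → ℂ) : ℕ → ℂ → ℂ
  | 0 => id
  | n + 1 => rightComp g n ∘ g n


/-! Möbius maps `z ↦ (z - b) / (1 - b̄ z)` preserve the pseudo-hyperbolic distance
`p(z, w) = ‖(z - w) / (1 - w̄ z)‖`; moving the middle point to `0` gives the strong triangle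
inequality `p(a, c) ≤ (p(a, b) + p(b, c)) / (1 + p(a, b) p(b, c))`, which the addition formula
for `artanh` turns into the triangle inequality for `ρ = 2 artanh p`. The estimate then follows by
induction on `n`, splitting `ρ(F_{n+1} z, f^{n+1} z)` at `f (F_n z)`: the first piece is at most
`sup_K ρ(f_{n+1}, f)` and the second at most `k ρ(F_n z, f^n z)`. -/

open ComplexConjugate

noncomputable def moebius (b z : ℂ) : ℂ := (z - b) / (1 - conj b * z)

noncomputable def pseudoHdist (z w : ℂ) : ℝ := ‖moebius w z‖

lemma hdist_eq_two_mul_artanh_pseudoHdist (z w : ℂ) : hdist z w = 2 * artanh (pseudoHdist z w) :=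
  rfl

lemma pseudoHdist_nonneg (z w : ℂ) : 0 ≤ pseudoHdist z w := norm_nonneg _

lemma one_sub_conj_mul_ne_zero {z w : ℂ} (hz : ‖z‖ < 1) (hw : ‖w‖ < 1) : 1 - conj w * z ≠ 0 := by
  refine sub_ne_zero.mpr fun h => ?_
  have : ‖conj w * z‖ < 1 := by
    rw [norm_mul, Complex.norm_conj]
    nlinarith [norm_nonneg z, norm_nonneg w]
  simp [← h] at this

lemma normSq_one_sub_conj_mul_sub_normSq_sub (z w : ℂ) :
    normSq (1 - conj w * z) - normSq (z - w) = (1 - normSq z) * (1 - normSq w) := by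
  simp only [normSq_apply, sub_re, sub_im, mul_re, mul_im, conj_re, conj_im, one_re, one_im]
  ring

lemma pseudoHdist_lt_one {z w : ℂ} (hz : ‖z‖ < 1) (hw : ‖w‖ < 1) : pseudoHdist z w < 1 := by
  have hden := one_sub_conj_mul_ne_zero hz hw
  have key : normSq (z - w) < normSq (1 - conj w * z) := by
    have := normSq_one_sub_conj_mul_sub_normSq_sub z w
    have hz' : normSq z < 1 := by rw [← Complex.sq_norm]; nlinarith [norm_nonneg z]
    have hw' : normSq w < 1 := by rw [← Complex.sq_norm]; nlinarith [norm_nonneg w]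
    nlinarith
  rw [pseudoHdist, moebius, norm_div, div_lt_one (norm_pos_iff.mpr hden), norm_def, norm_def]
  exact Real.sqrt_lt_sqrt (normSq_nonneg _) key

lemma pseudoHdist_comm (z w : ℂ) : pseudoHdist z w = pseudoHdist w z := by
  have : 1 - conj z * w = conj (1 - conj w * z) := by simp [mul_comm]
  rw [pseudoHdist, pseudoHdist, moebius, moebius, norm_div, norm_div, norm_sub_rev, this,
    Complex.norm_conj]

lemma moebius_moebius {a b c : ℂ} (ha : ‖a‖ < 1) (hb : ‖b‖ < 1) (hc : ‖c‖ < 1) :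
    moebius (moebius b c) (moebius b a) = moebius c a * ((1 - b * conj c) / (1 - conj b * c)) := by
  have hba := one_sub_conj_mul_ne_zero ha hb
  have hbc := one_sub_conj_mul_ne_zero hc hb
  have hca := one_sub_conj_mul_ne_zero ha hc
  have hbc' : 1 - b * conj c ≠ 0 := by simpa [mul_comm] using one_sub_conj_mul_ne_zero hb hc
  have hbb : 1 - b * conj b ≠ 0 := by simpa [mul_comm] using one_sub_conj_mul_ne_zero hb hb
  have hnum : moebius b a - moebius b c
      = (a - c) * (1 - b * conj b) / ((1 - conj b * a) * (1 - conj b * c)) := by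
    rw [moebius, moebius, div_sub_div _ _ hba hbc]; ring
  have hden : 1 - conj (moebius b c) * moebius b a
      = (1 - conj c * a) * (1 - b * conj b) / ((1 - b * conj c) * (1 - conj b * a)) := by
    rw [moebius, moebius, map_div₀, map_sub, map_sub, map_one, map_mul, conj_conj,
      div_mul_div_comm, one_sub_div (mul_ne_zero hbc' hba)]
    ring
  rw [show moebius (moebius b c) (moebius b a) = _ / _ from rfl, hnum, hden, moebius,
    div_div_div_eq, div_mul_div_comm,
    div_eq_div_iff (mul_ne_zero (mul_ne_zero hba hbc) (mul_ne_zero hca hbb)) (mul_ne_zero hca hbc)]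
  ring

lemma pseudoHdist_moebius {a b c : ℂ} (ha : ‖a‖ < 1) (hb : ‖b‖ < 1) (hc : ‖c‖ < 1) :
    pseudoHdist (moebius b a) (moebius b c) = pseudoHdist a c := by
  have : ‖1 - b * conj c‖ = ‖1 - conj b * c‖ := by
    rw [← Complex.norm_conj]; simp [mul_comm]
  rw [pseudoHdist, pseudoHdist, moebius_moebius ha hb hc, norm_mul, norm_div, this,
    div_self (norm_ne_zero_iff.mpr (one_sub_conj_mul_ne_zero hc hb)), mul_one]

lemma pseudoHdist_le_of_norm_lt_one {z w : ℂ} (hz : ‖z‖ < 1) (hw : ‖w‖ < 1) :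
    pseudoHdist z w ≤ (‖z‖ + ‖w‖) / (1 + ‖z‖ * ‖w‖) := by
  have hD : 0 < ‖1 - conj w * z‖ := norm_pos_iff.mpr (one_sub_conj_mul_ne_zero hz hw)
  have hDle : ‖1 - conj w * z‖ ≤ 1 + ‖z‖ * ‖w‖ := by
    refine (norm_sub_le _ _).trans ?_
    rw [norm_one, norm_mul, Complex.norm_conj, mul_comm]
  -- `(1 + |z||w|)² - (|z| + |w|)² = (1 - |z|²)(1 - |w|²) = |1 - w̄z|² - |z - w|²`
  have hid := normSq_one_sub_conj_mul_sub_normSq_sub z w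
  simp only [← Complex.sq_norm] at hid
  have hP : 0 ≤ (1 - ‖z‖ ^ 2) * (1 - ‖w‖ ^ 2) := by
    have := norm_nonneg z; have := norm_nonneg w
    apply mul_nonneg <;> nlinarith
  have hD2 : ‖1 - conj w * z‖ ^ 2 ≤ (1 + ‖z‖ * ‖w‖) ^ 2 := pow_le_pow_left₀ hD.le hDle 2
  rw [pseudoHdist, moebius, norm_div, div_le_div_iff₀ hD (by positivity),
    ← pow_le_pow_iff_left₀ (by positivity) (by positivity) two_ne_zero]
  nlinarith [mul_nonneg hP (sub_nonneg.mpr hD2)]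

lemma pseudoHdist_le_add_div {a b c : ℂ} (ha : ‖a‖ < 1) (hb : ‖b‖ < 1) (hc : ‖c‖ < 1) :
    pseudoHdist a c ≤
      (pseudoHdist a b + pseudoHdist b c) / (1 + pseudoHdist a b * pseudoHdist b c) := by
  have h := pseudoHdist_le_of_norm_lt_one (pseudoHdist_lt_one ha hb) (pseudoHdist_lt_one hc hb)
  rw [pseudoHdist_moebius ha hb hc] at h
  rwa [pseudoHdist_comm b c]

lemma artanh_eq_real_artanh {x : ℝ} (hx : x ∈ Icc (-1) 1) : artanh x = Real.artanh x :=
  (Real.artanh_eq_half_log hx).symm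

lemma artanh_le_artanh {x y : ℝ} (hx : -1 < x) (hy : y < 1) (hxy : x ≤ y) :
    artanh x ≤ artanh y := by
  rw [artanh_eq_real_artanh ⟨hx.le, hxy.trans hy.le⟩,
    artanh_eq_real_artanh ⟨hx.le.trans hxy, hy.le⟩]
  exact Real.artanh_le_artanh hx hy hxy

lemma artanh_add_div {x y : ℝ} (hx : x ∈ Ioo (-1) 1) (hy : y ∈ Ioo (-1) 1) :
    artanh ((x + y) / (1 + x * y)) = artanh x + artanh y := by
  obtain ⟨hx₀, hx₁⟩ := hx
  obtain ⟨hy₀, hy₁⟩ := hy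
  have hxy : 0 < 1 + x * y := by nlinarith
  have hnum : 1 + (x + y) / (1 + x * y) = (1 + x) * (1 + y) / (1 + x * y) := by
    field_simp; ring
  have hden : 1 - (x + y) / (1 + x * y) = (1 - x) * (1 - y) / (1 + x * y) := by
    field_simp; ring
  have harg : (1 + (x + y) / (1 + x * y)) / (1 - (x + y) / (1 + x * y))
      = (1 + x) / (1 - x) * ((1 + y) / (1 - y)) := by
    rw [hnum, hden, div_div_div_cancel_right₀ hxy.ne', mul_div_mul_comm]
  have h₁ : 0 < (1 + x) / (1 - x) := div_pos (by linarith) (by linarith)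
  have h₂ : 0 < (1 + y) / (1 - y) := div_pos (by linarith) (by linarith)
  rw [artanh, harg, Real.log_mul h₁.ne' h₂.ne', artanh, artanh]
  ring

lemma hdist_self (z : ℂ) : hdist z z = 0 := by
  simp [hdist, artanh]

lemma hdist_triangle {a b c : ℂ} (ha : a ∈ unitDisc) (hb : b ∈ unitDisc) (hc : c ∈ unitDisc) :
    hdist a c ≤ hdist a b + hdist b c := by
  have hp := pseudoHdist_lt_one ha hb
  have hq := pseudoHdist_lt_one hb hc
  have hp₀ := pseudoHdist_nonneg a b
  have hq₀ := pseudoHdist_nonneg b c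
  have hsum :
      (pseudoHdist a b + pseudoHdist b c) / (1 + pseudoHdist a b * pseudoHdist b c) < 1 := by
    rw [div_lt_one (by positivity)]
    nlinarith [mul_pos (sub_pos.2 hp) (sub_pos.2 hq)]
  simp only [hdist_eq_two_mul_artanh_pseudoHdist, ← mul_add,
    ← artanh_add_div ⟨by linarith, hp⟩ ⟨by linarith, hq⟩]
  gcongr 2 * ?_
  exact artanh_le_artanh (by linarith [pseudoHdist_nonneg a c]) hsum
    (pseudoHdist_le_add_div ha hb hc)

lemma leftComp_mapsTo {fseq : ℕ → ℂ → ℂ} {K : Set ℂ} (h : ∀ n, MapsTo (fseq n) K K) (n : ℕ) :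
    MapsTo (leftComp fseq n) K K := by
  induction n with
  | zero => exact mapsTo_id K
  | succ n ih => exact (h n).comp ih

lemma sum_range_succ_pow_sub_mul (k : ℝ) (C : ℕ → ℝ) (n : ℕ) :
    ∑ j ∈ Finset.range (n + 1), k ^ (n - j) * C j
      = k * ∑ j ∈ Finset.range n, k ^ (n - 1 - j) * C j + C n := by
  rw [Finset.sum_range_succ, Nat.sub_self, pow_zero, one_mul, Finset.mul_sum]
  congr 1
  refine Finset.sum_congr rfl fun j hj => ?_
  rw [← mul_assoc, ← pow_succ', show n - 1 - j + 1 = n - j by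
    have := Finset.mem_range.mp hj; omega]

lemma dist_leftComp_iterate_le {d : ℂ → ℂ → ℝ} {f : ℂ → ℂ} {fseq : ℕ → ℂ → ℂ} {K : Set ℂ}
    {k : ℝ} {C : ℕ → ℝ} (hd_triangle : ∀ x ∈ K, ∀ y ∈ K, ∀ z ∈ K, d x z ≤ d x y + d y z)
    (hfK : MapsTo f K K) (hfseqK : ∀ n, MapsTo (fseq n) K K) (hk : 0 ≤ k)
    (hcontr : ∀ z ∈ K, ∀ w ∈ K, d (f z) (f w) ≤ k * d z w)
    (hC : ∀ n, ∀ w ∈ K, d (fseq n w) (f w) ≤ C n) {z : ℂ} (hz : z ∈ K) (hd_self : d z z = 0) :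
    ∀ n, d (leftComp fseq n z) (f^[n] z) ≤ ∑ j ∈ Finset.range n, k ^ (n - 1 - j) * C j
  | 0 => by simp [leftComp, hd_self]
  | n + 1 => by
    have hF : leftComp fseq n z ∈ K := leftComp_mapsTo hfseqK n hz
    have hI : f^[n] z ∈ K := hfK.iterate n hz
    have ih := dist_leftComp_iterate_le hd_triangle hfK hfseqK hk hcontr hC hz hd_self n
    rw [Nat.add_sub_cancel, sum_range_succ_pow_sub_mul, Function.iterate_succ_apply']
    calc d (fseq n (leftComp fseq n z)) (f (f^[n] z))
        ≤ d (fseq n (leftComp fseq n z)) (f (leftComp fseq n z))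
          + d (f (leftComp fseq n z)) (f (f^[n] z)) :=
          hd_triangle _ (hfseqK n hF) _ (hfK hF) _ (hfK hI)
      _ ≤ C n + k * d (leftComp fseq n z) (f^[n] z) := add_le_add (hC n _ hF) (hcontr _ hF _ hI)
      _ ≤ k * ∑ j ∈ Finset.range n, k ^ (n - 1 - j) * C j + C n := by
          linarith [mul_le_mul_of_nonneg_left ih hk]

theorem left_composition_contraction_estimate_general
    (f : ℂ → ℂ) (fseq : ℕ → ℂ → ℂ) (K : Set ℂ) (k : ℝ)
    (hK : K ⊆ unitDisc)
    (hfK : MapsTo f K K) (hfseqK : ∀ n, MapsTo (fseq n) K K)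
    (hk0 : 0 < k)
    (hcontr : ∀ z ∈ K, ∀ w ∈ K, hdist (f z) (f w) ≤ k * hdist z w)
    (hbdd : ∀ n, BddAbove (Set.range fun w : K => hdist (fseq n w) (f w))) :
    ∀ z ∈ K, ∀ n : ℕ, 0 < n →
      hdist (leftComp fseq n z) (f^[n] z) ≤
        ∑ j ∈ Finset.range n, k ^ (n - 1 - j) * ⨆ w : K, hdist (fseq j w) (f w) := by
  intro z hz n _
  exact dist_leftComp_iterate_le (d := hdist) (C := fun j => ⨆ w : K, hdist (fseq j w) (f w))
    (fun _ hx _ hy _ hw => hdist_triangle (hK hx) (hK hy) (hK hw)) hfK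
    hfseqK hk0.le hcontr (fun n w hw => le_ciSup (hbdd n) ⟨w, hw⟩) hz (hdist_self z) n

/-- **Contraction estimate for left compositions (key inequality in Theorem 4).**
Indices are shifted: `fseq j` is the map `f_{j+1}`, so the summand `j ∈ range n`,
namely k^(n-1-j) ⬝ sup_{w ∈ K} ρ(f_{j+1} w, f w), matches the term
k^(n-j') ⬝ sup_{w ∈ K} ρ(f_{j'} w, f w) for j' = j+1 running from 1 to n.
The suprema are assumed finite via the `BddAbove` hypothesis. -/
theorem left_composition_contraction_estimate
    (f : ℂ → ℂ) (fseq : ℕ → ℂ → ℂ) (K : Set ℂ) (k : ℝ)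
    (hf : DifferentiableOn ℂ f unitDisc) (hfmap : MapsTo f unitDisc unitDisc)
    (hholo : ∀ n, DifferentiableOn ℂ (fseq n) unitDisc)
    (hself : ∀ n, MapsTo (fseq n) unitDisc unitDisc)
    (hK : K ⊆ unitDisc)
    (hfK : MapsTo f K K) (hfseqK : ∀ n, MapsTo (fseq n) K K)
    (hk0 : 0 < k) (hk1 : k < 1)
    (hcontr : ∀ z ∈ K, ∀ w ∈ K, hdist (f z) (f w) ≤ k * hdist z w)
    (hbdd : ∀ n, BddAbove (Set.range fun w : K => hdist (fseq n w) (f w))) :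
    ∀ z ∈ K, ∀ n : ℕ, 0 < n →
      hdist (leftComp fseq n z) (f^[n] z) ≤
        ∑ j ∈ Finset.range n, k ^ (n - 1 - j) * ⨆ w : K, hdist (fseq j w) (f w) :=
  left_composition_contraction_estimate_general f fseq K k hK hfK hfseqK hk0 hcontr hbdd
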